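/- Let φ be a kernel-preserving skew-morphism of a finite group A (i.e. φ(Ker φ) = Ker φ). Then Ker φ is a normal subgroup of A, and the restriction of φ to Ker φ is an automorphism of Ker φ. -/
import Mathlib


/-- A skew-morphism of a group `A`: a permutation `φ` fixing the identity together with
a power function `pi` (a natural-number representative of the `ℤ_n`-valued power function,
`n = orderOf φ`) such that `φ (x * y) = φ x * φ ^ (pi x) y`. -/
structure SkewMorphism (A : Type*) [Group A] where
  toPerm : Equiv.Perm A
  pi : A → ℕ
  map_one' : toPerm 1 = 1
  skew : ∀ x y : A, toPerm (x * y) = toPerm x * (toPerm ^ pi x) y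

/-- The kernel of a skew-morphism: elements where the power function is `1` in `ℤ_n`. -/
def SkewMorphism.ker {A : Type*} [Group A] (S : SkewMorphism A) : Set A :=
  {x : A | S.pi x ≡ 1 [MOD orderOf S.toPerm]}

/-- The core of a skew-morphism: `⋂_{i=1}^{n} φ^i (Ker φ)`. -/
def SkewMorphism.core {A : Type*} [Group A] (S : SkewMorphism A) : Set A :=
  ⋂ i ∈ Finset.Icc 1 (orderOf S.toPerm), (S.toPerm ^ i) '' S.ker

namespace SkewMorphism

variable {A : Type*} [Group A] [Fintype A] (S : SkewMorphism A)

/-- Iterated skew law. -/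
lemma skew_pow (k : ℕ) (x y : A) :
    (S.toPerm ^ k) (x * y) =
      (S.toPerm ^ k) x *
        (S.toPerm ^ (∑ i ∈ Finset.range k, S.pi ((S.toPerm ^ i) x))) y := by
  induction k with
  | zero => simp
  | succ k ih =>
    have h1 : (S.toPerm ^ (k + 1)) (x * y) = S.toPerm ((S.toPerm ^ k) (x * y)) := by
      rw [pow_succ', Equiv.Perm.mul_apply]
    rw [h1, ih, S.skew, Finset.sum_range_succ]
    congr 1
    · rw [pow_succ', Equiv.Perm.mul_apply]
    · rw [← Equiv.Perm.mul_apply, ← pow_add, add_comm]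

lemma pi_one_modEq : S.pi (1 : A) ≡ 1 [MOD orderOf S.toPerm] := by
  have h : S.toPerm ^ S.pi (1 : A) = S.toPerm ^ 1 := by
    ext y
    have := (S.skew 1 y).symm
    simpa [S.map_one'] using this
  exact pow_eq_pow_iff_modEq.mp h

lemma one_mem_ker : (1 : A) ∈ S.ker := S.pi_one_modEq

lemma mem_ker_iff (x : A) :
    x ∈ S.ker ↔ ((S.pi x : ℕ) : ZMod (orderOf S.toPerm)) = 1 := by
  rw [show (1 : ZMod (orderOf S.toPerm)) = ((1 : ℕ) : ZMod (orderOf S.toPerm)) by simp,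
    ZMod.natCast_eq_natCast_iff]
  rfl

/-- The fundamental congruence for the power function of a product. -/
lemma pi_mul_modEq (a b : A) :
    S.pi (a * b) ≡ ∑ i ∈ Finset.range (S.pi a), S.pi ((S.toPerm ^ i) b)
      [MOD orderOf S.toPerm] := by
  apply pow_eq_pow_iff_modEq.mp
  ext z
  have h1 : S.toPerm ((a * b) * z) =
      (S.toPerm a * (S.toPerm ^ S.pi a) b) * (S.toPerm ^ S.pi (a * b)) z := by
    rw [S.skew (a * b) z, S.skew a b]
  have h2 : S.toPerm (a * (b * z)) =
      (S.toPerm a * (S.toPerm ^ S.pi a) b) *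
        (S.toPerm ^ (∑ i ∈ Finset.range (S.pi a), S.pi ((S.toPerm ^ i) b))) z := by
    rw [S.skew a (b * z), S.skew_pow (S.pi a) b z, mul_assoc]
  have h3 : (a * b) * z = a * (b * z) := mul_assoc a b z
  have h4 := h1.symm.trans (by rw [h3, h2])
  exact mul_left_cancel h4

/-- The sum of the power function over a full period is divisible by the order. -/
lemma pow_sum_pi_eq_one (a : A) :
    S.toPerm ^ (∑ i ∈ Finset.range (orderOf S.toPerm), S.pi ((S.toPerm ^ i) a)) = 1 := by
  ext y
  have h := S.skew_pow (orderOf S.toPerm) a y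
  rw [pow_orderOf_eq_one] at h
  simp only [Equiv.Perm.one_apply] at h
  simpa using (mul_left_cancel h).symm

lemma sum_pi_cast_zero (a : A) :
    ((∑ i ∈ Finset.range (orderOf S.toPerm), S.pi ((S.toPerm ^ i) a) : ℕ) :
      ZMod (orderOf S.toPerm)) = 0 := by
  have h := orderOf_dvd_of_pow_eq_one (S.pow_sum_pi_eq_one a)
  rw [show (0 : ZMod (orderOf S.toPerm)) = ((0 : ℕ) : ZMod (orderOf S.toPerm)) by simp,
    ZMod.natCast_eq_natCast_iff]
  exact (Nat.modEq_zero_iff_dvd).mpr h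

/-- Reduction of partial sums of the (periodic) power function sequence mod the order. -/
lemma sum_pi_cast (a : A) (k : ℕ) :
    ((∑ i ∈ Finset.range k, S.pi ((S.toPerm ^ i) a) : ℕ) : ZMod (orderOf S.toPerm))
      = ((∑ i ∈ Finset.range (k % orderOf S.toPerm), S.pi ((S.toPerm ^ i) a) : ℕ) :
          ZMod (orderOf S.toPerm)) := by
  induction k using Nat.strong_induction_on with
  | _ k ih =>
    rcases lt_or_ge k (orderOf S.toPerm) with h | h
    · rw [Nat.mod_eq_of_lt h]
    · have hn : 0 < orderOf S.toPerm := orderOf_pos _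
      obtain ⟨j, rfl⟩ : ∃ j, k = orderOf S.toPerm + j := ⟨k - orderOf S.toPerm, by omega⟩
      rw [Finset.sum_range_add]
      have hper : ∀ i, S.pi ((S.toPerm ^ (orderOf S.toPerm + i)) a) = S.pi ((S.toPerm ^ i) a) := by
        intro i
        rw [pow_add, pow_orderOf_eq_one, one_mul]
      simp only [hper]
      rw [Nat.add_mod_left, Nat.cast_add, S.sum_pi_cast_zero a, zero_add]
      exact ih j (by omega)

section KernelPreserving

variable (hkp : S.toPerm '' S.ker = S.ker)

include hkp

lemma pow_mem_ker (i : ℕ) {x : A} (hx : x ∈ S.ker) : (S.toPerm ^ i) x ∈ S.ker := by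
  induction i with
  | zero => simpa using hx
  | succ i ih =>
    have h : S.toPerm ((S.toPerm ^ i) x) ∈ S.ker := by
      rw [← hkp]; exact Set.mem_image_of_mem _ ih
    rw [pow_succ', Equiv.Perm.mul_apply]
    exact h

/-- `pi` is constant (mod the order) on right cosets of the kernel. -/
lemma pi_ker_mul {x : A} (hx : x ∈ S.ker) (a : A) :
    ((S.pi (x * a) : ℕ) : ZMod (orderOf S.toPerm)) = (S.pi a : ZMod (orderOf S.toPerm)) := by
  have h := S.pi_mul_modEq x a
  rw [← ZMod.natCast_eq_natCast_iff] at h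
  rw [h, S.sum_pi_cast a (S.pi x)]
  have hx' : S.pi x % orderOf S.toPerm = 1 % orderOf S.toPerm := hx
  rw [hx', ← S.sum_pi_cast a 1]
  simp

lemma mul_mem_ker {x y : A} (hx : x ∈ S.ker) (hy : y ∈ S.ker) : x * y ∈ S.ker := by
  rw [S.mem_ker_iff]
  have h := S.pi_mul_modEq x y
  rw [← ZMod.natCast_eq_natCast_iff] at h
  rw [h, Nat.cast_sum]
  rw [Finset.sum_congr rfl
    (fun i _ => (S.mem_ker_iff _).mp (S.pow_mem_ker hkp i hy))]
  rw [Finset.sum_const, Finset.card_range, nsmul_eq_mul, mul_one]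
  exact (S.mem_ker_iff x).mp hx

lemma inv_mem_ker {x : A} (hx : x ∈ S.ker) : x⁻¹ ∈ S.ker := by
  have hpow : ∀ k : ℕ, x ^ k ∈ S.ker := by
    intro k
    induction k with
    | zero => simpa using S.one_mem_ker
    | succ k ih =>
      rw [pow_succ]
      exact S.mul_mem_ker hkp ih hx
  have hx0 : 0 < orderOf x := orderOf_pos x
  have hmul : x * x ^ (orderOf x - 1) = 1 := by
    rw [← pow_succ', show orderOf x - 1 + 1 = orderOf x by omega, pow_orderOf_eq_one]
  rw [inv_eq_of_mul_eq_one_right hmul]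
  exact hpow _

lemma conj_mem_ker {x : A} (hx : x ∈ S.ker) (a : A) : a⁻¹ * x * a ∈ S.ker := by
  rw [mul_assoc, S.mem_ker_iff]
  have h := S.pi_mul_modEq a⁻¹ (x * a)
  rw [← ZMod.natCast_eq_natCast_iff] at h
  rw [h, Nat.cast_sum]
  have key : ∀ i : ℕ, ((S.pi ((S.toPerm ^ i) (x * a)) : ℕ) : ZMod (orderOf S.toPerm))
      = (S.pi ((S.toPerm ^ i) a) : ZMod (orderOf S.toPerm)) := by
    intro i
    have hxy := S.skew_pow i x a
    have hs : S.toPerm ^ (∑ j ∈ Finset.range i, S.pi ((S.toPerm ^ j) x)) = S.toPerm ^ i := by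
      rw [pow_eq_pow_iff_modEq, ← ZMod.natCast_eq_natCast_iff, Nat.cast_sum]
      rw [Finset.sum_congr rfl
        (fun j _ => (S.mem_ker_iff _).mp (S.pow_mem_ker hkp j hx))]
      rw [Finset.sum_const, Finset.card_range, nsmul_eq_mul, mul_one]
    rw [hs] at hxy
    rw [hxy]
    exact S.pi_ker_mul hkp (S.pow_mem_ker hkp i hx) _
  rw [Finset.sum_congr rfl (fun i _ => key i)]
  have h2 := S.pi_mul_modEq a⁻¹ a
  rw [← ZMod.natCast_eq_natCast_iff, Nat.cast_sum] at h2
  rw [← h2, inv_mul_cancel]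
  exact (S.mem_ker_iff 1).mp S.one_mem_ker

end KernelPreserving

end SkewMorphism

theorem kernel_preserving_normal_and_restriction {A : Type*} [Group A] [Fintype A]
    (S : SkewMorphism A) (hkp : S.toPerm '' S.ker = S.ker) :
    (∃ H : Subgroup A, (H : Set A) = S.ker ∧ H.Normal) ∧
      ∀ x ∈ S.ker, ∀ y ∈ S.ker, S.toPerm (x * y) = S.toPerm x * S.toPerm y := by
  constructor
  · refine ⟨{ carrier := S.ker
              one_mem' := S.one_mem_ker
              mul_mem' := fun hx hy => S.mul_mem_ker hkp hx hy
              inv_mem' := fun hx => S.inv_mem_ker hkp hx }, rfl, ?_⟩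
    constructor
    intro x hx g
    have h := S.conj_mem_ker hkp (show x ∈ S.ker from hx) g⁻¹
    simpa using h
  · intro x hx y _
    have hφ : S.toPerm ^ S.pi x = S.toPerm := by
      have h : S.toPerm ^ S.pi x = S.toPerm ^ 1 :=
        pow_eq_pow_iff_modEq.mpr (show S.pi x ≡ 1 [MOD orderOf S.toPerm] from hx)
      simpa using h
    rw [S.skew, hφ]
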